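/- Under the two-component Gaussian mixture model x ∼ α_1 N_p(μ_1, Σ) + α_2 N_p(μ_2, Σ) with α_1 + α_2 = 1, α_1, α_2 > 0, α_1 ≠ 1/2, μ_1 ≠ μ_2, Σ positive definite: the squared skewness u ↦ γ(u)^2 over unit vectors u, where γ(u) = E[(u'(x − Ex))^3]/(E[(u'(x − Ex))^2])^{3/2}, is uniquely maximized at u = ± θ/‖θ‖, where θ = Σ^{-1}(μ_2 − μ_1). If instead α_1 = 1/2, then γ(u)^2 = 0 for all unit vectors u. -/

import Mathlib

/-!
Projected onto `u`, the mixture is a univariate two-component Gaussian mixture with common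
variance `q = u'Σu` and mean gap `δ = u'(μ₂ - μ₁)`; its second and third central moments are
`q + α₁α₂δ²` and `α₁α₂(α₁ - α₂)δ³`. Hence `γ(u)² = (α₁α₂(α₁ - α₂))² (ρ / (1 + α₁α₂ρ))³`, where
`ρ = δ² / q` is Fisher's discriminant ratio. For `α₁ = 1/2` this vanishes; otherwise it is strictly
increasing in `ρ`, and by Cauchy–Schwarz for the inner product given by `Σ`,
`δ² = (u'Σθ)² ≤ (u'Σu)(θ'Σθ)` with equality exactly when `u` is parallel to `θ`.
-/

open MeasureTheory ProbabilityTheory Matrix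

/-- A `p`-variate Gaussian measure with mean `m` and covariance `S` (positive semidefinite),
realized as the pushforward of a standard Gaussian by `w ↦ m + S^{1/2} w`. -/
noncomputable def mvGaussian {p : ℕ} (m : Fin p → ℝ) {S : Matrix (Fin p) (Fin p) ℝ}
    (hS : S.PosSemidef) : Measure (Fin p → ℝ) :=
  (Measure.pi fun _ : Fin p => gaussianReal 0 1).map fun w => m + ((hS.1.eigenvectorUnitary : Matrix (Fin p) (Fin p) ℝ) *
    diagonal (fun i => Real.sqrt (hS.1.eigenvalues i)) *
    (star hS.1.eigenvectorUnitary : Matrix (Fin p) (Fin p) ℝ)).mulVec w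

open scoped NNReal

namespace ProbabilityTheory

variable {μ : ℝ} {v : ℝ≥0}

lemma integrable_pow_gaussianReal (n : ℕ) : Integrable (fun x => x ^ n) (gaussianReal μ v) :=
  integrable_pow_of_mem_interior_integrableExpSet (X := id) (by simp) n

lemma integral_sq_gaussianReal : ∫ x, x ^ 2 ∂gaussianReal μ v = μ ^ 2 + v := by
  have := variance_eq_sub (memLp_id_gaussianReal (μ := μ) (v := v) 2)
  simp only [variance_id_gaussianReal, Pi.pow_apply, id_eq, integral_id_gaussianReal] at this
  linarith

lemma integral_pow_three_gaussianReal_zero : ∫ x, x ^ 3 ∂gaussianReal 0 v = 0 := by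
  have h : ∫ x, (-x) ^ 3 ∂gaussianReal 0 v = ∫ x, x ^ 3 ∂gaussianReal 0 v := by
    conv_rhs => rw [← neg_zero, ← gaussianReal_map_neg, integral_map (by fun_prop) (by fun_prop)]
  simp only [Odd.neg_pow (by decide : Odd 3), integral_neg] at h
  linarith

lemma integral_pow_three_gaussianReal : ∫ x, x ^ 3 ∂gaussianReal μ v = μ ^ 3 + 3 * μ * v := by
  have hshift : gaussianReal μ v = (gaussianReal 0 v).map (μ + ·) := by
    rw [gaussianReal_map_const_add, zero_add]
  have hexp (x : ℝ) : (μ + x) ^ 3 = x ^ 3 + 3 * μ * x ^ 2 + 3 * μ ^ 2 * x ^ 1 + μ ^ 3 := by ring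
  have hint := integrable_pow_gaussianReal (μ := 0) (v := v)
  rw [hshift, integral_map (by fun_prop) (by fun_prop)]
  simp_rw [hexp]
  rw [integral_add (by fun_prop) (integrable_const _), integral_add (by fun_prop) (by fun_prop),
    integral_add (by fun_prop) (by fun_prop), integral_const_mul, integral_const_mul,
    integral_pow_three_gaussianReal_zero, integral_sq_gaussianReal]
  simp only [pow_one, integral_id_gaussianReal, integral_const, probReal_univ, smul_eq_mul]
  ring

open Complex in
lemma map_dotProduct_pi_gaussianReal {ι : Type*} [Fintype ι] (v : ι → ℝ) :
    (Measure.pi fun _ : ι => gaussianReal 0 1).map (v ⬝ᵥ ·) =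
      gaussianReal 0 (v ⬝ᵥ v).toNNReal := by
  refine Measure.ext_of_charFun (funext fun t => ?_)
  have hprod (w : ι → ℝ) : cexp (t * (v ⬝ᵥ w : ℝ) * I) = ∏ i, cexp ((t * v i : ℝ) * w i * I) := by
    simp only [dotProduct, ofReal_sum, ofReal_mul, Finset.mul_sum, Finset.sum_mul, Complex.exp_sum]
    congr! 2 with i; ring
  rw [charFun_apply_real, integral_map (by fun_prop) (by fun_prop)]
  simp_rw [hprod]
  rw [integral_fintype_prod_eq_prod (f := fun i (x : ℝ) => cexp ((t * v i : ℝ) * x * I))]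
  simp_rw [← charFun_apply_real, charFun_gaussianReal, ← Complex.exp_sum]
  rw [Real.coe_toNNReal (v ⬝ᵥ v) (Finset.sum_nonneg fun i _ => mul_self_nonneg (v i))]
  congr 1
  simp only [dotProduct, ofReal_sum, ofReal_mul, ofReal_zero, mul_zero, zero_mul, zero_sub,
    Finset.sum_neg_distrib, Finset.sum_mul, Finset.sum_div, NNReal.coe_one, ofReal_one, one_mul]
  congr! 2 with i
  ring

end ProbabilityTheory

namespace Matrix

variable {n : Type*} [Fintype n] {S : Matrix n n ℝ}

lemma PosSemidef.dotProduct_mulVec_comm (hS : S.PosSemidef) (x y : n → ℝ) :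
    x ⬝ᵥ S *ᵥ y = y ⬝ᵥ S *ᵥ x := by
  have hT : Sᵀ = S := by simpa [conjTranspose_eq_transpose_of_trivial] using hS.isHermitian.eq
  rw [dotProduct_mulVec, ← mulVec_transpose, hT, dotProduct_comm]

variable [DecidableEq n]

lemma PosSemidef.isSymm_toBilin' (hS : S.PosSemidef) : LinearMap.IsSymm (toBilin' S) :=
  LinearMap.isSymm_def.2 fun x y => by simp [toBilin'_apply', hS.dotProduct_mulVec_comm x y]

lemma PosSemidef.dotProduct_mulVec_sq_le (hS : S.PosSemidef) (x y : n → ℝ) :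
    (x ⬝ᵥ S *ᵥ y) ^ 2 ≤ (x ⬝ᵥ S *ᵥ x) * (y ⬝ᵥ S *ᵥ y) := by
  simpa only [toBilin'_apply'] using (toBilin' S).apply_sq_le_of_symm
    (fun x => by simpa [toBilin'_apply'] using hS.dotProduct_mulVec_nonneg x) hS.isSymm_toBilin' x y

lemma PosDef.eq_smul_of_dotProduct_mulVec_sq_eq (hS : S.PosDef) {x y : n → ℝ} (hy : y ≠ 0)
    (h : (x ⬝ᵥ S *ᵥ y) ^ 2 = (x ⬝ᵥ S *ᵥ x) * (y ⬝ᵥ S *ᵥ y)) :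
    x = ((y ⬝ᵥ S *ᵥ x) / (y ⬝ᵥ S *ᵥ y)) • y := by
  have hyy : 0 < y ⬝ᵥ S *ᵥ y := by simpa using hS.dotProduct_mulVec_pos hy
  have hzero : (y ⬝ᵥ S *ᵥ x) • y - (y ⬝ᵥ S *ᵥ y) • x = 0 := by
    by_contra hne
    have hpos := hS.dotProduct_mulVec_pos hne
    have hexp := (toBilin' S).apply_smul_sub_smul_sub_eq y x
    simp only [toBilin'_apply', star_trivial] at hexp hpos
    rw [hexp, hS.posSemidef.dotProduct_mulVec_comm y x] at hpos
    nlinarith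
  rw [sub_eq_zero] at hzero
  rw [div_eq_inv_mul, mul_smul, hzero, smul_smul, inv_mul_cancel₀ hyy.ne', one_smul]

end Matrix

namespace Matrix.PosSemidef

variable {n : Type*} [Fintype n] [DecidableEq n] {S : Matrix n n ℝ}

noncomputable def spectralSqrt (hS : S.PosSemidef) : Matrix n n ℝ :=
  (hS.1.eigenvectorUnitary : Matrix n n ℝ) * diagonal (fun i => √(hS.1.eigenvalues i)) *
    (star hS.1.eigenvectorUnitary : Matrix n n ℝ)

lemma spectralSqrt_transpose (hS : S.PosSemidef) : hS.spectralSqrtᵀ = hS.spectralSqrt := by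
  rw [← conjTranspose_eq_transpose_of_trivial]
  simp [spectralSqrt, star_eq_conjTranspose, Matrix.mul_assoc]

lemma spectralSqrt_mul_self (hS : S.PosSemidef) : hS.spectralSqrt * hS.spectralSqrt = S := by
  have hU : (star hS.1.eigenvectorUnitary : Matrix n n ℝ) * hS.1.eigenvectorUnitary = 1 :=
    Unitary.coe_star_mul_self _
  conv_rhs => rw [hS.1.spectral_theorem, Unitary.conjStarAlgAut_apply]
  simp only [spectralSqrt, Matrix.mul_assoc]
  rw [← Matrix.mul_assoc (star _), hU, Matrix.one_mul, ← Matrix.mul_assoc (diagonal _),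
    diagonal_mul_diagonal]
  congr 3
  funext i
  simp [Real.mul_self_sqrt (hS.eigenvalues_nonneg i)]

lemma vecMul_spectralSqrt_dotProduct_self (hS : S.PosSemidef) (u : n → ℝ) :
    (u ᵥ* hS.spectralSqrt) ⬝ᵥ (u ᵥ* hS.spectralSqrt) = u ⬝ᵥ S *ᵥ u := by
  rw [← dotProduct_mulVec, ← mulVec_transpose, spectralSqrt_transpose, mulVec_mulVec,
    spectralSqrt_mul_self]

end Matrix.PosSemidef

section mvGaussian

variable {p : ℕ} {S : Matrix (Fin p) (Fin p) ℝ} (m : Fin p → ℝ) (hS : S.PosSemidef)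

lemma mvGaussian_eq_map :
    mvGaussian m hS = (Measure.pi fun _ => gaussianReal 0 1).map (m + hS.spectralSqrt *ᵥ ·) :=
  rfl

lemma map_dotProduct_sub_mvGaussian (u c : Fin p → ℝ) :
    (mvGaussian m hS).map (fun z => u ⬝ᵥ (z - c)) =
      gaussianReal (u ⬝ᵥ (m - c)) (u ⬝ᵥ S *ᵥ u).toNNReal := by
  have hcomp : (fun z => u ⬝ᵥ (z - c)) ∘ (m + hS.spectralSqrt *ᵥ ·) =
      (u ⬝ᵥ (m - c) + ·) ∘ ((u ᵥ* hS.spectralSqrt) ⬝ᵥ ·) := by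
    funext w
    simp only [Function.comp_apply, add_sub_right_comm, dotProduct_add, dotProduct_mulVec]
  rw [mvGaussian_eq_map, Measure.map_map (by fun_prop) (by fun_prop), hcomp,
    ← Measure.map_map (by fun_prop) (by fun_prop), map_dotProduct_pi_gaussianReal,
    gaussianReal_map_const_add, zero_add, hS.vecMul_spectralSqrt_dotProduct_self]

lemma integrable_dotProduct_sub_pow_mvGaussian (u c : Fin p → ℝ) (n : ℕ) :
    Integrable (fun z => (u ⬝ᵥ (z - c)) ^ n) (mvGaussian m hS) := by
  have h := integrable_pow_gaussianReal (μ := u ⬝ᵥ (m - c)) (v := (u ⬝ᵥ S *ᵥ u).toNNReal) n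
  rwa [← map_dotProduct_sub_mvGaussian m hS u c,
    integrable_map_measure (by fun_prop) (by fun_prop)] at h

lemma integral_dotProduct_sub_pow_mvGaussian (u c : Fin p → ℝ) (n : ℕ) :
    ∫ z, (u ⬝ᵥ (z - c)) ^ n ∂mvGaussian m hS =
      ∫ x, x ^ n ∂gaussianReal (u ⬝ᵥ (m - c)) (u ⬝ᵥ S *ᵥ u).toNNReal := by
  rw [← map_dotProduct_sub_mvGaussian, integral_map (by fun_prop) (by fun_prop)]

lemma integrable_id_mvGaussian : Integrable (fun z => z) (mvGaussian m hS) :=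
  Integrable.of_eval fun i => by
    simpa using integrable_dotProduct_sub_pow_mvGaussian m hS (Pi.single i 1) 0 1

lemma integral_id_mvGaussian : ∫ z, z ∂mvGaussian m hS = m := by
  funext i
  rw [eval_integral (integrable_id_mvGaussian m hS).eval]
  simpa using integral_dotProduct_sub_pow_mvGaussian m hS (Pi.single i 1) 0 1

end mvGaussian

lemma integral_ofReal_smul_add_ofReal_smul_measure {E F : Type*} [MeasurableSpace E]
    [NormedAddCommGroup F] [NormedSpace ℝ F] {a1 a2 : ℝ} (ha1 : 0 ≤ a1) (ha2 : 0 ≤ a2)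
    {ν1 ν2 : Measure E} {g : E → F} (hg1 : Integrable g ν1) (hg2 : Integrable g ν2) :
    ∫ z, g z ∂(ENNReal.ofReal a1 • ν1 + ENNReal.ofReal a2 • ν2) =
      a1 • ∫ z, g z ∂ν1 + a2 • ∫ z, g z ∂ν2 := by
  rw [integral_add_measure (hg1.smul_measure ENNReal.ofReal_ne_top)
    (hg2.smul_measure ENNReal.ofReal_ne_top), integral_smul_measure, integral_smul_measure,
    ENNReal.toReal_ofReal ha1, ENNReal.toReal_ofReal ha2]

section gaussianMixture

variable {p : ℕ} {S : Matrix (Fin p) (Fin p) ℝ} {a1 a2 : ℝ} {m1 m2 : Fin p → ℝ}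

noncomputable def gaussianMixture (a1 a2 : ℝ) (m1 m2 : Fin p → ℝ) (hS : S.PosSemidef) :
    Measure (Fin p → ℝ) :=
  ENNReal.ofReal a1 • mvGaussian m1 hS + ENNReal.ofReal a2 • mvGaussian m2 hS

lemma integral_id_gaussianMixture (hS : S.PosSemidef) (ha1 : 0 ≤ a1) (ha2 : 0 ≤ a2) :
    ∫ z, z ∂gaussianMixture a1 a2 m1 m2 hS = a1 • m1 + a2 • m2 := by
  rw [gaussianMixture, integral_ofReal_smul_add_ofReal_smul_measure ha1 ha2
    (integrable_id_mvGaussian m1 hS) (integrable_id_mvGaussian m2 hS),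
    integral_id_mvGaussian, integral_id_mvGaussian]

lemma integral_dotProduct_sub_pow_gaussianMixture (hS : S.PosSemidef) (ha1 : 0 ≤ a1)
    (ha2 : 0 ≤ a2) (u c : Fin p → ℝ) (n : ℕ) :
    ∫ z, (u ⬝ᵥ (z - c)) ^ n ∂gaussianMixture a1 a2 m1 m2 hS =
      a1 * ∫ x, x ^ n ∂gaussianReal (u ⬝ᵥ (m1 - c)) (u ⬝ᵥ S *ᵥ u).toNNReal +
        a2 * ∫ x, x ^ n ∂gaussianReal (u ⬝ᵥ (m2 - c)) (u ⬝ᵥ S *ᵥ u).toNNReal := by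
  rw [gaussianMixture, integral_ofReal_smul_add_ofReal_smul_measure ha1 ha2
    (integrable_dotProduct_sub_pow_mvGaussian m1 hS u c n)
    (integrable_dotProduct_sub_pow_mvGaussian m2 hS u c n),
    integral_dotProduct_sub_pow_mvGaussian, integral_dotProduct_sub_pow_mvGaussian,
    smul_eq_mul, smul_eq_mul]

end gaussianMixture

noncomputable def projSkewness {ι : Type*} [Fintype ι] (μ : Measure (ι → ℝ)) (u : ι → ℝ) : ℝ :=
  (∫ z, (u ⬝ᵥ (z - ∫ z, z ∂μ)) ^ 3 ∂μ) / (∫ z, (u ⬝ᵥ (z - ∫ z, z ∂μ)) ^ 2 ∂μ) ^ ((3 : ℝ) / 2)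

lemma projSkewness_gaussianMixture {p : ℕ} {S : Matrix (Fin p) (Fin p) ℝ} (hS : S.PosSemidef)
    {a1 a2 : ℝ} (ha1 : 0 ≤ a1) (ha2 : 0 ≤ a2) (hsum : a1 + a2 = 1) (m1 m2 u : Fin p → ℝ) :
    projSkewness (gaussianMixture a1 a2 m1 m2 hS) u =
      a1 * a2 * (a1 - a2) * (u ⬝ᵥ (m2 - m1)) ^ 3 /
        (u ⬝ᵥ S *ᵥ u + a1 * a2 * (u ⬝ᵥ (m2 - m1)) ^ 2) ^ ((3 : ℝ) / 2) := by
  obtain rfl : a1 = 1 - a2 := eq_sub_of_add_eq hsum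
  have hq : 0 ≤ u ⬝ᵥ S *ᵥ u := by simpa using hS.dotProduct_mulVec_nonneg u
  have hc1 : m1 - ((1 - a2) • m1 + a2 • m2) = (-a2) • (m2 - m1) := by module
  have hc2 : m2 - ((1 - a2) • m1 + a2 • m2) = (1 - a2) • (m2 - m1) := by module
  rw [projSkewness, integral_id_gaussianMixture hS ha1 ha2,
    integral_dotProduct_sub_pow_gaussianMixture hS ha1 ha2,
    integral_dotProduct_sub_pow_gaussianMixture hS ha1 ha2, integral_pow_three_gaussianReal,
    integral_pow_three_gaussianReal, integral_sq_gaussianReal, integral_sq_gaussianReal,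
    Real.coe_toNNReal _ hq, hc1, hc2, dotProduct_smul, dotProduct_smul, smul_eq_mul, smul_eq_mul]
  congr 1
  · ring
  · congr 1; ring

section fisherRatio

variable {n : Type*} [Fintype n] {S : Matrix n n ℝ}

noncomputable def fisherRatio (S : Matrix n n ℝ) (d u : n → ℝ) : ℝ :=
  (u ⬝ᵥ d) ^ 2 / (u ⬝ᵥ S *ᵥ u)

lemma fisherRatio_nonneg (hS : S.PosSemidef) (d u : n → ℝ) : 0 ≤ fisherRatio S d u :=
  div_nonneg (sq_nonneg _) (by simpa using hS.dotProduct_mulVec_nonneg u)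

lemma fisherRatio_smul (d u : n → ℝ) {r : ℝ} (hr : r ≠ 0) :
    fisherRatio S d (r • u) = fisherRatio S d u := by
  simp only [fisherRatio, smul_dotProduct, mulVec_smul, dotProduct_smul, smul_eq_mul]
  rw [mul_pow, ← mul_assoc, ← sq, mul_div_mul_left _ _ (pow_ne_zero 2 hr)]

lemma fisherRatio_mulVec_self (θ : n → ℝ) : fisherRatio S (S *ᵥ θ) θ = θ ⬝ᵥ S *ᵥ θ := by
  rw [fisherRatio, sq, mul_self_div_self]

lemma inv_sqrt_sum_sq_ne_zero {θ : n → ℝ} (hθ : θ ≠ 0) : (√(∑ i, θ i ^ 2))⁻¹ ≠ 0 := by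
  obtain ⟨i, hi⟩ := Function.ne_iff.1 hθ
  exact inv_ne_zero (Real.sqrt_pos.2 (Finset.sum_pos' (fun j _ => sq_nonneg (θ j))
    ⟨i, Finset.mem_univ i, sq_pos_of_ne_zero hi⟩)).ne'

lemma fisherRatio_mulVec_normalize {θ : n → ℝ} (hθ : θ ≠ 0) :
    fisherRatio S (S *ᵥ θ) ((√(∑ i, θ i ^ 2))⁻¹ • θ) = θ ⬝ᵥ S *ᵥ θ := by
  rw [fisherRatio_smul _ _ (inv_sqrt_sum_sq_ne_zero hθ), fisherRatio_mulVec_self]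

lemma eq_or_eq_neg_of_eq_smul {u θ : n → ℝ} {r : ℝ} (hu : ∑ i, u i ^ 2 = 1) (h : u = r • θ) :
    u = (√(∑ i, θ i ^ 2))⁻¹ • θ ∨ u = -((√(∑ i, θ i ^ 2))⁻¹ • θ) := by
  have hr : r ^ 2 * ∑ i, θ i ^ 2 = 1 := by
    simpa [h, mul_pow, Finset.mul_sum] using hu
  have hN : 0 < ∑ i, θ i ^ 2 :=
    (Finset.sum_nonneg fun i _ => sq_nonneg (θ i)).lt_of_ne (by rintro h0; simp [← h0] at hr)
  have hsq : r ^ 2 = ((√(∑ i, θ i ^ 2))⁻¹) ^ 2 := by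
    rw [inv_pow, Real.sq_sqrt hN.le]
    exact eq_inv_of_mul_eq_one_left hr
  rcases sq_eq_sq_iff_eq_or_eq_neg.1 hsq with hr' | hr'
  · exact Or.inl (by rw [h, hr'])
  · exact Or.inr (by rw [h, hr', neg_smul])

variable [DecidableEq n]

lemma Matrix.PosSemidef.fisherRatio_mulVec_le (hS : S.PosSemidef) (θ u : n → ℝ) :
    fisherRatio S (S *ᵥ θ) u ≤ θ ⬝ᵥ S *ᵥ θ := by
  have hθ : 0 ≤ θ ⬝ᵥ S *ᵥ θ := by simpa using hS.dotProduct_mulVec_nonneg θ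
  rcases (show 0 ≤ u ⬝ᵥ S *ᵥ u by simpa using hS.dotProduct_mulVec_nonneg u).eq_or_lt with hu | hu
  · simp [fisherRatio, ← hu, hθ]
  · rw [fisherRatio, div_le_iff₀ hu, mul_comm]
    exact hS.dotProduct_mulVec_sq_le u θ

lemma Matrix.PosDef.exists_eq_smul_of_fisherRatio_mulVec_eq (hS : S.PosDef) {θ u : n → ℝ}
    (hθ : θ ≠ 0) (h : fisherRatio S (S *ᵥ θ) u = θ ⬝ᵥ S *ᵥ θ) : ∃ r : ℝ, u = r • θ := by
  rcases eq_or_ne u 0 with rfl | hu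
  · exact ⟨0, (zero_smul ℝ θ).symm⟩
  have hq : 0 < u ⬝ᵥ S *ᵥ u := by simpa using hS.dotProduct_mulVec_pos hu
  rw [fisherRatio, div_eq_iff hq.ne', mul_comm] at h
  exact ⟨_, hS.eq_smul_of_dotProduct_mulVec_sq_eq hθ h⟩

lemma Matrix.PosDef.fisherRatio_mulVec_eq_iff (hS : S.PosDef) {θ u : n → ℝ} (hθ : θ ≠ 0)
    (hu : ∑ i, u i ^ 2 = 1) :
    fisherRatio S (S *ᵥ θ) u = θ ⬝ᵥ S *ᵥ θ ↔
      u = (√(∑ i, θ i ^ 2))⁻¹ • θ ∨ u = -((√(∑ i, θ i ^ 2))⁻¹ • θ) := by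
  refine ⟨fun h => ?_, ?_⟩
  · obtain ⟨r, hr⟩ := hS.exists_eq_smul_of_fisherRatio_mulVec_eq hθ h
    exact eq_or_eq_neg_of_eq_smul hu hr
  · rintro (rfl | rfl)
    · exact fisherRatio_mulVec_normalize hθ
    · rw [← neg_one_smul ℝ, fisherRatio_smul _ _ (by norm_num), fisherRatio_mulVec_normalize hθ]

end fisherRatio

lemma strictMonoOn_mul_div_one_add_mul_pow_three {K c : ℝ} (hK : 0 < K) (hc : 0 ≤ c) :
    StrictMonoOn (fun x : ℝ => K * (x / (1 + c * x)) ^ 3) (Set.Ici 0) := by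
  intro x (hx : 0 ≤ x) y (hy : 0 ≤ y) hxy
  have hdiv : x / (1 + c * x) < y / (1 + c * y) := by
    rw [div_lt_div_iff₀ (by positivity) (by positivity)]
    linarith
  dsimp only
  gcongr

/-- At `u = 0` both sides vanish, through `0 / 0 = 0`. -/
lemma projSkewness_gaussianMixture_sq {p : ℕ} {S : Matrix (Fin p) (Fin p) ℝ} (hS : S.PosDef)
    {a1 a2 : ℝ} (ha1 : 0 ≤ a1) (ha2 : 0 ≤ a2) (hsum : a1 + a2 = 1) (m1 m2 u : Fin p → ℝ) :
    projSkewness (gaussianMixture a1 a2 m1 m2 hS.posSemidef) u ^ 2 =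
      (a1 * a2 * (a1 - a2)) ^ 2 *
        (fisherRatio S (m2 - m1) u / (1 + a1 * a2 * fisherRatio S (m2 - m1) u)) ^ 3 := by
  rw [projSkewness_gaussianMixture hS.posSemidef ha1 ha2 hsum]
  rcases eq_or_ne u 0 with rfl | hu
  · simp [fisherRatio]
  have hq : 0 < u ⬝ᵥ S *ᵥ u := by simpa using hS.dotProduct_mulVec_pos hu
  have hden : 0 ≤ u ⬝ᵥ S *ᵥ u + a1 * a2 * (u ⬝ᵥ (m2 - m1)) ^ 2 := by positivity
  have hrpow : ((u ⬝ᵥ S *ᵥ u + a1 * a2 * (u ⬝ᵥ (m2 - m1)) ^ 2) ^ ((3 : ℝ) / 2)) ^ 2 =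
      (u ⬝ᵥ S *ᵥ u + a1 * a2 * (u ⬝ᵥ (m2 - m1)) ^ 2) ^ 3 := by
    rw [← Real.rpow_natCast _ 2, ← Real.rpow_mul hden]
    norm_num
  rw [div_pow, hrpow, fisherRatio]
  field_simp

/-- under the two-component Gaussian mixture, if `α₁ ≠ 1/2` the squared
skewness of projections is uniquely maximized at `± θ/‖θ‖` with `θ = Σ⁻¹(μ₂ − μ₁)`;
if `α₁ = 1/2` the squared skewness of every projection vanishes. -/
theorem stmt_16 (p : ℕ) (a1 a2 : ℝ) (ha1 : 0 < a1) (ha2 : 0 < a2) (hsum : a1 + a2 = 1)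
    (m1 m2 : Fin p → ℝ) (hm : m1 ≠ m2)
    (S : Matrix (Fin p) (Fin p) ℝ) (hS : S.PosDef) :
    let μ := ENNReal.ofReal a1 • mvGaussian m1 hS.posSemidef
        + ENNReal.ofReal a2 • mvGaussian m2 hS.posSemidef
    let m := ∫ z, z ∂μ
    let γ := fun u : Fin p → ℝ =>
      (∫ z, (u ⬝ᵥ (z - m)) ^ 3 ∂μ) / (∫ z, (u ⬝ᵥ (z - m)) ^ 2 ∂μ) ^ ((3 : ℝ) / 2)
    let θ := S⁻¹.mulVec (m2 - m1)
    let θn := (Real.sqrt (∑ i, θ i ^ 2))⁻¹ • θ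
    (a1 ≠ 1 / 2 →
      ∀ u : Fin p → ℝ, (∑ i, u i ^ 2) = 1 →
        γ u ^ 2 ≤ γ θn ^ 2 ∧ (γ u ^ 2 = γ θn ^ 2 ↔ u = θn ∨ u = -θn)) ∧
    (a1 = 1 / 2 → ∀ u : Fin p → ℝ, (∑ i, u i ^ 2) = 1 → γ u ^ 2 = 0) := by
  intro μ m γ θ θn
  have hγ (u : Fin p → ℝ) : γ u ^ 2 = (a1 * a2 * (a1 - a2)) ^ 2 *
      (fisherRatio S (m2 - m1) u / (1 + a1 * a2 * fisherRatio S (m2 - m1) u)) ^ 3 :=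
    projSkewness_gaussianMixture_sq hS ha1.le ha2.le hsum m1 m2 u
  refine ⟨fun h12 u hu => ?_, fun h12 u _ => ?_⟩
  · have hSθ : S *ᵥ θ = m2 - m1 := by
      simp [θ, mulVec_mulVec, mul_nonsing_inv _ (isUnit_iff_ne_zero.2 hS.det_pos.ne')]
    have hθ : θ ≠ 0 := fun h0 => hm (by simpa [h0, sub_eq_zero, eq_comm] using hSθ)
    have hK : 0 < (a1 * a2 * (a1 - a2)) ^ 2 := by
      have : a1 - a2 ≠ 0 := fun h => h12 (by linarith)
      positivity
    have hmono := strictMonoOn_mul_div_one_add_mul_pow_three hK (mul_pos ha1 ha2).le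
    have hρ := fisherRatio_nonneg hS.posSemidef (m2 - m1)
    have hρθn : fisherRatio S (S *ᵥ θ) θn = θ ⬝ᵥ S *ᵥ θ := fisherRatio_mulVec_normalize hθ
    rw [hγ, hγ, hmono.le_iff_le (hρ u) (hρ θn), hmono.eq_iff_eq (hρ u) (hρ θn), ← hSθ, hρθn]
    exact ⟨hS.posSemidef.fisherRatio_mulVec_le θ u, hS.fisherRatio_mulVec_eq_iff hθ hu⟩
  · rw [hγ, show a1 - a2 = 0 by linarith]
    simp
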